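/- arXiv:math/0702584 — 2 statements merged into one kernel-verified Lean document; each statement's English description precedes it below -/
import Mathlib

section
/- In the setting of a left A-bialgebra H, if M and N are left H-modules, then M ⊗_A N (tensor over A using the A-module structures restricted from H) carries a natural left H-module structure via the comultiplication Δ : H → H ⊗̄_A H, and for M = A (with the H-action u·a = ε(ua)) the resulting H-module structure on A ⊗_A N ≅ N agrees with the original one on N. -/
/-!
A left `H`-module `M` gives, for each `m`, the `A`-linear orbit map `H → M`, `u ↦ u·m`, and
`a • m` corresponds to precomposing it with right multiplication by `a`. Hence
`m ⊗ n ↦ (orbit m ⊗ orbit n)(Δ u)` is `A`-balanced exactly because `Δ u` lies in the Takeuchi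
product `H ×_A H`, so it descends to `M ⊗_A N`; multiplicativity and unitality of `Δ` make this an
algebra map `H → End_k (M ⊗_A N)`. On `A ⊗_A N` the counit law `Σ ε(u⁽¹⁾) u⁽²⁾ = u` collapses
`u · (1 ⊗ n)` to `1 ⊗ u·n`.
-/

open TensorProduct

namespace TensorProduct

theorem linearMap_ext_tmul {R T M N P : Type*} [CommSemiring R] [Semiring T]
    [AddCommMonoid M] [AddCommMonoid N] [AddCommMonoid P] [Module R M] [Module R N]
    [Module T (M ⊗[R] N)] [Module T P] {φ ψ : M ⊗[R] N →ₗ[T] P}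
    (h : ∀ m n, φ (m ⊗ₜ n) = ψ (m ⊗ₜ n)) : φ = ψ := by
  ext x
  induction x with
  | zero => simp
  | tmul m n => exact h m n
  | add x y hx hy => rw [map_add, map_add, hx, hy]

variable {R S M N P Q : Type*} [CommSemiring R] [Monoid S]
  [AddCommMonoid M] [AddCommMonoid N] [AddCommMonoid P] [AddCommMonoid Q]
  [Module R M] [Module R N] [Module R P] [Module R Q]

theorem map_smul_left_apply_of_smulCommClass [DistribMulAction S P] [SMulCommClass R S P]
    (s : S) (f : M →ₗ[R] P) (g : N →ₗ[R] Q) (x : M ⊗[R] N) :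
    map (s • f) g x = s • map f g x := by
  induction x with
  | zero => simp
  | tmul m n => simp [smul_tmul']
  | add x y hx hy => rw [map_add, map_add, hx, hy, smul_add]

theorem map_smul_of_map_smul_left [DistribMulAction S M] [SMulCommClass R S M]
    [DistribMulAction S P] [SMulCommClass R S P] {f : M →ₗ[R] P} (g : N →ₗ[R] Q) {s : S}
    (hf : ∀ m, f (s • m) = s • f m) (x : M ⊗[R] N) :
    map f g (s • x) = s • map f g x := by
  induction x with
  | zero => simp
  | tmul m n => simp [smul_tmul', hf]
  | add x y hx hy => rw [smul_add, map_add, map_add, hx, hy, smul_add]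

end TensorProduct

namespace LeftBialgebra

variable {k A H M N : Type*} [CommSemiring k] [CommSemiring A] [Algebra k A]
  [Semiring H] [Algebra k H] {ι : A →ₐ[k] H} [Module A H]
  (hAH : ∀ (a : A) (u : H), a • u = ι a * u)

def mulRightMap (a : A) : H →ₗ[A] H where
  toFun u := u * ι a
  map_add' u v := add_mul u v (ι a)
  map_smul' b u := by simp only [hAH, mul_assoc, RingHom.id_apply]

@[simp]
theorem mulRightMap_apply (a : A) (u : H) : mulRightMap hAH a u = u * ι a := rfl

theorem sum_counit_tmul_eq_one_tmul {N : Type*} [AddCommMonoid N] [Module k N] [Module A N]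
    {ρN : H →ₐ[k] Module.End k N} (hρN : ∀ (a : A) (n : N), ρN (ι a) n = a • n)
    {ε : H →ₗ[A] A} {c : H → ℕ} {u₁ u₂ : (u : H) → Fin (c u) → H}
    (hcounit : ∀ u : H, ∑ i, ι (ε (u₁ u i)) * u₂ u i = u) (u : H) (n : N) :
    ∑ i, ε (u₁ u i) ⊗ₜ[A] ρN (u₂ u i) n = (1 : A) ⊗ₜ[A] ρN u n := by
  conv_rhs => rw [← hcounit u]
  simp only [map_sum, LinearMap.sum_apply, tmul_sum, map_mul, Module.End.mul_apply, hρN,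
    ← smul_tmul, smul_eq_mul, mul_one]

variable [AddCommMonoid M] [Module k M] [Module A M] [SMulCommClass A k M]
  (ρM : H →ₐ[k] Module.End k M) (hρM : ∀ (a : A) (m : M), ρM (ι a) m = a • m)

def orbitMap : M →ₗ[k] H →ₗ[A] M where
  toFun m :=
    { toFun u := ρM u m
      map_add' u v := by simp
      map_smul' a u := by simp [hAH, hρM] }
  map_add' m m' := by ext; simp
  map_smul' c m := by ext; simp

@[simp]
theorem orbitMap_apply (m : M) (u : H) : orbitMap hAH ρM hρM m u = ρM u m := rfl

theorem orbitMap_smul (a : A) (m : M) :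
    orbitMap hAH ρM hρM (a • m) = orbitMap hAH ρM hρM m ∘ₗ mulRightMap hAH a := by
  ext u
  simp [← hρM]

theorem orbitMap_apply_smul (m : M) (c : k) (u : H) :
    orbitMap hAH ρM hρM m (c • u) = c • orbitMap hAH ρM hρM m u := by
  simp

variable [AddCommMonoid N] [Module k N] [Module A N] [SMulCommClass A k N]
  (ρN : H →ₐ[k] Module.End k N) (hρN : ∀ (a : A) (n : N), ρN (ι a) n = a • n)

theorem map_orbitMap_smul_left {t : H ⊗[A] H} {a : A}
    (ht : (mulRightMap hAH a).rTensor H t = (mulRightMap hAH a).lTensor H t) (m : M) (n : N) :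
    map (orbitMap hAH ρM hρM (a • m)) (orbitMap hAH ρN hρN n) t =
      map (orbitMap hAH ρM hρM m) (orbitMap hAH ρN hρN (a • n)) t := by
  rw [orbitMap_smul, orbitMap_smul, ← LinearMap.map_rTensor, ← LinearMap.map_lTensor, ht]

-- `hΔbal` says that `Δ` takes values in the Takeuchi product `H ×_A H`.
variable [SMulCommClass A k H] (Δ : H →ₗ[k] H ⊗[A] H)
  (hΔbal : ∀ (u : H) (a : A),
    (mulRightMap hAH a).rTensor H (Δ u) = (mulRightMap hAH a).lTensor H (Δ u))

-- Only `k`-linear, not `A`-linear, hence `liftAddHom` rather than `TensorProduct.lift`.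
def tensorActionAt (u : H) : M ⊗[A] N →ₗ[k] M ⊗[A] N where
  toFun := liftAddHom
    { toFun m :=
        { toFun n := map (orbitMap hAH ρM hρM m) (orbitMap hAH ρN hρN n) (Δ u)
          map_zero' := by simp
          map_add' n n' := by simp [map_add_right] }
      map_zero' := by ext; simp
      map_add' m m' := by ext; simp [map_add_left] }
    fun a m n => map_orbitMap_smul_left hAH ρM hρM ρN hρN (hΔbal u a) m n
  map_add' := map_add _
  map_smul' c x := by
    induction x with
    | zero => simp
    | tmul m n => simp [smul_tmul', map_smul_left_apply_of_smulCommClass]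
    | add x y hx hy => simp only [smul_add, map_add, hx, hy]

@[simp]
theorem tensorActionAt_tmul (u : H) (m : M) (n : N) :
    tensorActionAt hAH ρM hρM ρN hρN Δ hΔbal u (m ⊗ₜ n) =
      map (orbitMap hAH ρM hρM m) (orbitMap hAH ρN hρN n) (Δ u) := rfl

def tensorActionLinear : H →ₗ[k] Module.End k (M ⊗[A] N) where
  toFun := tensorActionAt hAH ρM hρM ρN hρN Δ hΔbal
  map_add' u v := linearMap_ext_tmul fun m n => by simp
  map_smul' c u := linearMap_ext_tmul fun m n => by
    simp [map_smul_of_map_smul_left _ (orbitMap_apply_smul hAH ρM hρM m c)]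

variable {c : H → ℕ} {u₁ u₂ : (u : H) → Fin (c u) → H}

theorem tensorActionAt_tmul_eq_sum (hrep : ∀ u : H, Δ u = ∑ i, u₁ u i ⊗ₜ[A] u₂ u i)
    (u : H) (m : M) (n : N) :
    tensorActionAt hAH ρM hρM ρN hρN Δ hΔbal u (m ⊗ₜ n) =
      ∑ i, ρM (u₁ u i) m ⊗ₜ[A] ρN (u₂ u i) n := by
  simp [hrep]

theorem tensorActionAt_one (hΔone : Δ 1 = 1 ⊗ₜ 1) :
    tensorActionAt hAH ρM hρM ρN hρN Δ hΔbal 1 = 1 :=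
  linearMap_ext_tmul fun m n => by simp [hΔone]

theorem tensorActionAt_mul (hrep : ∀ u : H, Δ u = ∑ i, u₁ u i ⊗ₜ[A] u₂ u i)
    (hΔmul : ∀ u v : H, Δ (u * v) = ∑ i, ∑ j, (u₁ u i * u₁ v j) ⊗ₜ[A] (u₂ u i * u₂ v j))
    (u v : H) :
    tensorActionAt hAH ρM hρM ρN hρN Δ hΔbal (u * v) =
      tensorActionAt hAH ρM hρM ρN hρN Δ hΔbal u * tensorActionAt hAH ρM hρM ρN hρN Δ hΔbal v :=
  linearMap_ext_tmul fun m n => by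
    rw [Module.End.mul_apply, tensorActionAt_tmul_eq_sum hAH ρM hρM ρN hρN Δ hΔbal hrep v,
      map_sum, tensorActionAt_tmul, hΔmul]
    simp only [map_sum, map_tmul, orbitMap_apply, map_mul, Module.End.mul_apply,
      tensorActionAt_tmul_eq_sum hAH ρM hρM ρN hρN Δ hΔbal hrep]
    exact Finset.sum_comm

def tensorAction (hrep : ∀ u : H, Δ u = ∑ i, u₁ u i ⊗ₜ[A] u₂ u i) (hΔone : Δ 1 = 1 ⊗ₜ 1)
    (hΔmul : ∀ u v : H, Δ (u * v) = ∑ i, ∑ j, (u₁ u i * u₁ v j) ⊗ₜ[A] (u₂ u i * u₂ v j)) :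
    H →ₐ[k] Module.End k (M ⊗[A] N) :=
  AlgHom.ofLinearMap (tensorActionLinear hAH ρM hρM ρN hρN Δ hΔbal)
    (tensorActionAt_one hAH ρM hρM ρN hρN Δ hΔbal hΔone)
    (tensorActionAt_mul hAH ρM hρM ρN hρN Δ hΔbal hrep hΔmul)

end LeftBialgebra

open TensorProduct in
/- STATEMENT 10: Let H be a left A-bialgebra (counit ε : H → A, comultiplication
Δ : H → H ⊗̄_A H, written below via chosen finite-sum representations
Δu = Σᵢ u1ᵢ ⊗ u2ᵢ, with the left-bialgebra axioms: Δ identical on A, Δ landing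
in H ⊗̄_A H, Δ multiplicative, and the counit law Σ ε(u⁽¹⁾)·u⁽²⁾ = u).
If M, N are left H-modules (actions ρM, ρN restricting to the A-actions via
A ⊆ H), then M ⊗_A N carries a left H-module structure with
u·(m ⊗ n) = Σᵢ (u1ᵢ·m) ⊗ (u2ᵢ·n); and for M = A with its H-action
u·a = ε(u·a), the resulting structure on A ⊗_A N ≅ N agrees with that of N. -/
theorem stmt10 {k A H M N : Type*} [Field k] [CommRing A] [Algebra k A]
    [Ring H] [Algebra k H] (ι : A →ₐ[k] H)
    [Module A H] (hAH : ∀ (a : A) (u : H), a • u = ι a * u)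
    [SMulCommClass A k H] [SMulCommClass A k A]
    [AddCommGroup M] [Module k M] [Module A M] [SMulCommClass A k M]
    [AddCommGroup N] [Module k N] [Module A N] [SMulCommClass A k N]
    (ρM : H →ₐ[k] Module.End k M) (hρM : ∀ (a : A) (m : M), ρM (ι a) m = a • m)
    (ρN : H →ₐ[k] Module.End k N) (hρN : ∀ (a : A) (n : N), ρN (ι a) n = a • n)
    (ε : H →ₗ[A] A)
    (Δ : H →ₗ[k] H ⊗[A] H)
    (c : H → ℕ) (u1 u2 : (u : H) → Fin (c u) → H)
    (hrep : ∀ u : H, Δ u = ∑ i, u1 u i ⊗ₜ[A] u2 u i)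
    (hΔA : ∀ a : A, Δ (ι a) = (ι a) ⊗ₜ[A] (1 : H))
    (hΔbar : ∀ (u : H) (a : A),
      ∑ i, (u1 u i * ι a) ⊗ₜ[A] u2 u i = ∑ i, u1 u i ⊗ₜ[A] (u2 u i * ι a))
    (hΔmul : ∀ u v : H,
      Δ (u * v) = ∑ i, ∑ j, (u1 u i * u1 v j) ⊗ₜ[A] (u2 u i * u2 v j))
    (hcounit : ∀ u : H, ∑ i, ι (ε (u1 u i)) * u2 u i = u) :
    (∃ act : H →ₐ[k] Module.End k (M ⊗[A] N),
      ∀ (u : H) (m : M) (n : N),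
        act u (m ⊗ₜ[A] n) = ∑ i, (ρM (u1 u i) m) ⊗ₜ[A] (ρN (u2 u i) n)) ∧
    (∀ act' : H →ₐ[k] Module.End k (A ⊗[A] N),
      (∀ (u : H) (a : A) (n : N),
        act' u (a ⊗ₜ[A] n) = ∑ i, (ε (u1 u i * ι a)) ⊗ₜ[A] (ρN (u2 u i) n)) →
      ∀ (u : H) (n : N), act' u ((1 : A) ⊗ₜ[A] n) = (1 : A) ⊗ₜ[A] (ρN u n)) := by
  have hΔbal : ∀ (u : H) (a : A),
      (LeftBialgebra.mulRightMap hAH a).rTensor H (Δ u) =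
        (LeftBialgebra.mulRightMap hAH a).lTensor H (Δ u) := fun u a => by
    simpa [hrep] using hΔbar u a
  have hΔone : Δ 1 = 1 ⊗ₜ 1 := by simpa using hΔA 1
  refine ⟨⟨LeftBialgebra.tensorAction hAH ρM hρM ρN hρN Δ hΔbal hrep hΔone hΔmul,
    LeftBialgebra.tensorActionAt_tmul_eq_sum hAH ρM hρM ρN hρN Δ hΔbal hrep⟩, ?_⟩
  intro act' hact' u n
  simpa [hact'] using LeftBialgebra.sum_counit_tmul_eq_one_tmul hρN hcounit u n
end

section
/- Let k be a field of characteristic zero and V a finite-dimensional k-vector space with basis z₁,…,zₙ. The right-normed brackets [z_{i₁},[z_{i₂},…[z_{i_{d−1}}, z_{i_d}]…]] with i₁ ≥ i₂ ≥ … ≥ i_{d−1} < i_d and d ≥ 2 are linearly independent in the free Lie algebra FL(V). -/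
/-- The right-normed bracket `[z_{i₁},[z_{i₂},…[z_{i_{d−1}}, z_{i_d}]…]]` of
generators of the free Lie algebra indexed by a list. -/
noncomputable def rnBracket (k : Type*) [CommRing k] {X : Type*} :
    List X → FreeLieAlgebra k X
  | [] => 0
  | [i] => FreeLieAlgebra.of k i
  | i :: l => ⁅FreeLieAlgebra.of k i, rnBracket k l⁆

/-- Index type for Reutenauer's generators: a degree `d + 2 ≥ 2` together with a
multi-index `i₁ ≥ i₂ ≥ … ≥ i_{d+1} < i_{d+2}` (weakly decreasing, with the last
step strictly increasing). -/
def ReutenauerIndex (n : ℕ) : Type :=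
  Σ d : ℕ, {i : Fin (d + 2) → Fin n //
    (∀ j : Fin (d + 1), (j : ℕ) < d → i j.succ ≤ i j.castSucc) ∧
    i (Fin.castSucc (Fin.last d)) < i (Fin.last (d + 1))}

/-!
Send `FreeLieAlgebra k X` to the free associative algebra `k[FreeMonoid X]` and order words
lexicographically. If `P` is homogeneous with least word `L` (coefficient a unit), then
`x * P - P * x` is homogeneous with least word `min (x :: L) (L ++ [x])`, as long as these differ.
Iterating, the right-normed bracket of `v ++ c^(k+1) ++ [a]`, where `c < a` and `c` lies below every
letter of `v`, has least word `c^(k+1) ++ a :: v.reverse` with coefficient `±1`. These least words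
are distinct for distinct brackets, so the family is triangular and hence linearly independent.
Reutenauer's words `i₁ ≥ ⋯ ≥ i_{d-1} < i_d` have this shape, with `c = i_{d-1}`.
-/

namespace List

variable {α : Type*}

theorem Lex.append_right_of_length_eq {r : α → α → Prop} {l₁ l₂ : List α}
    (h : Lex r l₁ l₂) (hlen : l₁.length = l₂.length) (s : List α) :
    Lex r (l₁ ++ s) (l₂ ++ s) := by
  induction h with
  | nil => simp at hlen
  | cons _ ih => exact .cons (ih (by simpa using hlen))
  | rel hab => exact .rel hab

theorem append_le_append_right_of_length_eq [LinearOrder α] {l₁ l₂ : List α}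
    (hle : l₁ ≤ l₂) (hlen : l₁.length = l₂.length) (s : List α) : l₁ ++ s ≤ l₂ ++ s := by
  rcases hle.lt_or_eq with hlt | rfl
  · exact le_of_lt (hlt.append_right_of_length_eq hlen s)
  · exact le_rfl

theorem replicate_append_cons_inj {c a a' : α} {k k' : ℕ} {s s' : List α}
    (ha : a ≠ c) (ha' : a' ≠ c) (h : replicate k c ++ a :: s = replicate k' c ++ a' :: s') :
    k = k' ∧ a = a' ∧ s = s' := by
  induction k generalizing k' with
  | zero =>
    cases k' with
    | zero => simpa using h
    | succ k' => exact absurd (cons_eq_cons.mp h).1 ha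
  | succ k ih =>
    cases k' with
    | zero => exact absurd (cons_eq_cons.mp h).1.symm ha'
    | succ k' => simpa using ih (cons_eq_cons.mp h).2

theorem replicate_succ_append_cons_inj {c c' a a' : α} {k k' : ℕ} {s s' : List α}
    (ha : a ≠ c) (ha' : a' ≠ c')
    (h : replicate (k + 1) c ++ a :: s = replicate (k' + 1) c' ++ a' :: s') :
    c = c' ∧ k = k' ∧ a = a' ∧ s = s' := by
  obtain rfl : c = c' := (cons_eq_cons.mp h).1
  exact ⟨rfl, (replicate_append_cons_inj ha ha' h).imp Nat.succ_inj.mp id⟩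

theorem exists_eq_append_replicate_of_isChain [LinearOrder α] {u : List α} {c : α}
    (hu : (u ++ [c]).IsChain (· ≥ ·)) :
    ∃ v k, u ++ [c] = v ++ replicate (k + 1) c ∧ ∀ y ∈ v, c < y := by
  induction u with
  | nil => exact ⟨[], 0, rfl, by simp⟩
  | cons y u ih =>
    rw [cons_append, isChain_cons] at hu
    obtain ⟨v, k, huv, hv⟩ := ih hu.2
    rw [cons_append, huv]
    rcases v with _ | ⟨z, v⟩
    · have hcy : c ≤ y := hu.1 c (by simp [huv, replicate_succ])
      rcases hcy.lt_or_eq with hlt | rfl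
      · exact ⟨[y], k, rfl, by simpa using hlt⟩
      · exact ⟨[], k + 1, rfl, by simp⟩
    · have hzy : z ≤ y := hu.1 z (by simp [huv])
      refine ⟨y :: z :: v, k, rfl, ?_⟩
      exact forall_mem_cons.mpr ⟨(hv z (by simp)).trans_le hzy, hv⟩

end List

theorem LinearIndependent.of_isUnit_coeff_of_le {ι W R M : Type*} [Ring R] [AddCommGroup M]
    [Module R M] [LinearOrder W] {v : ι → M} (coeff : W → M →ₗ[R] R) (lead : ι → W)
    (hlead : Function.Injective lead) (hunit : ∀ i, IsUnit (coeff (lead i) (v i)))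
    (hle : ∀ i w, coeff w (v i) ≠ 0 → lead i ≤ w) :
    LinearIndependent R v := by
  classical
  rw [linearIndependent_iff']
  intro s g hsum i hi
  by_contra hgi
  obtain ⟨i₀, hi₀, hmin⟩ := Finset.exists_min_image {j ∈ s | g j ≠ 0} lead ⟨i, by simp [hi, hgi]⟩
  rw [Finset.mem_filter] at hi₀
  have hzero : ∀ j ∈ s, j ≠ i₀ → coeff (lead i₀) (g j • v j) = 0 := by
    intro j hj hji
    rw [map_smul, smul_eq_mul]
    by_contra hne
    have hle' := hle j _ (right_ne_zero_of_mul hne)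
    have hge := hmin j (by simp [hj, left_ne_zero_of_mul hne])
    exact hji (hlead (le_antisymm hle' hge))
  have h := congrArg (coeff (lead i₀)) hsum
  rw [map_sum, Finset.sum_eq_single_of_mem i₀ hi₀.1 hzero, map_smul, smul_eq_mul,
    map_zero] at h
  exact hi₀.2 ((hunit i₀).mul_left_eq_zero.mp h)

namespace MonoidAlgebra

open FreeMonoid

variable {R : Type*} [CommRing R]

section Cancel

variable {M : Type*} [Monoid M] [IsCancelMul M] {P : MonoidAlgebra R M} {m w : M} {r : R}

theorem exists_eq_mul_of_coeff_single_mul_ne_zero (h : (single m r * P).coeff w ≠ 0) :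
    ∃ w', w = m * w' ∧ P.coeff w' ≠ 0 := by
  by_contra! hw
  refine h (coeff_single_mul_of_forall_mul_ne _ _ fun d hd => h ?_)
  rw [← hd, coeff_single_mul_mul, hw d hd.symm, mul_zero]

theorem exists_eq_mul_of_coeff_mul_single_ne_zero (h : (P * single m r).coeff w ≠ 0) :
    ∃ w', w = w' * m ∧ P.coeff w' ≠ 0 := by
  by_contra! hw
  refine h (coeff_mul_single_of_forall_mul_ne _ _ fun d hd => h ?_)
  rw [← hd, coeff_mul_single_mul, hw d hd.symm, zero_mul]

end Cancel

variable {X : Type*} [LinearOrder X]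

def IsLeadingWord (P : MonoidAlgebra R (FreeMonoid X)) (L : List X) : Prop :=
  IsUnit (P.coeff (ofList L)) ∧
    ∀ w : List X, P.coeff (ofList w) ≠ 0 → w.length = L.length ∧ L ≤ w

theorem isLeadingWord_single_of (x : X) :
    IsLeadingWord (single (FreeMonoid.of x) (1 : R)) [x] := by
  classical
  refine ⟨by simp [coeff_single], fun w hw => ?_⟩
  rw [coeff_single, Finsupp.single_apply, ite_ne_right_iff] at hw
  obtain rfl : w = [x] := by simpa [eq_comm] using congrArg toList hw.1
  exact ⟨rfl, le_rfl⟩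

theorem IsLeadingWord.commutator {P : MonoidAlgebra R (FreeMonoid X)} {L : List X}
    (hP : IsLeadingWord P L) (x : X) (hx : x :: L ≠ L ++ [x]) :
    IsLeadingWord (single (FreeMonoid.of x) 1 * P - P * single (FreeMonoid.of x) 1)
      (min (x :: L) (L ++ [x])) := by
  set e : MonoidAlgebra R (FreeMonoid X) := single (FreeMonoid.of x) 1
  have hleft : ∀ w, (e * P).coeff (ofList w) ≠ 0 → w.length = L.length + 1 ∧ x :: L ≤ w := by
    intro w hw
    obtain ⟨w', hw, hw'⟩ := exists_eq_mul_of_coeff_single_mul_ne_zero hw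
    obtain rfl : w = x :: w'.toList := by simpa using congrArg toList hw
    obtain ⟨hlen, hle⟩ := hP.2 w'.toList (by simpa using hw')
    exact ⟨by simp [hlen], List.cons_le_cons x hle⟩
  have hright : ∀ w, (P * e).coeff (ofList w) ≠ 0 → w.length = L.length + 1 ∧ L ++ [x] ≤ w := by
    intro w hw
    obtain ⟨w', hw, hw'⟩ := exists_eq_mul_of_coeff_mul_single_ne_zero hw
    obtain rfl : w = w'.toList ++ [x] := by simpa using congrArg toList hw
    obtain ⟨hlen, hle⟩ := hP.2 w'.toList (by simpa using hw')
    exact ⟨by simp [hlen], List.append_le_append_right_of_length_eq hle hlen.symm _⟩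
  have hleft_coeff : (e * P).coeff (ofList (x :: L)) = P.coeff (ofList L) := by
    rw [ofList_cons, coeff_single_mul_mul, one_mul]
  have hright_coeff : (P * e).coeff (ofList (L ++ [x])) = P.coeff (ofList L) := by
    rw [ofList_append, ofList_singleton, coeff_mul_single_mul, mul_one]
  refine ⟨?_, fun w hw => ?_⟩
  · rcases lt_or_gt_of_ne hx with hlt | hgt
    · have hzero : (P * e).coeff (ofList (x :: L)) = 0 := by
        by_contra hne
        exact (hright _ hne).2.not_gt hlt
      rw [min_eq_left hlt.le, coeff_sub, Finsupp.sub_apply, hleft_coeff, hzero, sub_zero]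
      exact hP.1
    · have hzero : (e * P).coeff (ofList (L ++ [x])) = 0 := by
        by_contra hne
        exact (hleft _ hne).2.not_gt hgt
      rw [min_eq_right hgt.le, coeff_sub, Finsupp.sub_apply, hright_coeff, hzero, zero_sub]
      exact hP.1.neg
  · rw [coeff_sub, Finsupp.sub_apply] at hw
    have hlen : (min (x :: L) (L ++ [x])).length = L.length + 1 := by
      rcases min_choice (x :: L) (L ++ [x]) with h | h <;> simp [h]
    by_cases hl : (e * P).coeff (ofList w) = 0
    · obtain ⟨hwlen, hle⟩ := hright w (by rintro h; simp [hl, h] at hw)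
      exact ⟨hwlen.trans hlen.symm, (min_le_right _ _).trans hle⟩
    · obtain ⟨hwlen, hle⟩ := hleft w hl
      exact ⟨hwlen.trans hlen.symm, (min_le_left _ _).trans hle⟩

end MonoidAlgebra

namespace FreeLieAlgebra

open MonoidAlgebra FreeMonoid List

attribute [local instance 100] LieRing.ofAssociativeRing

variable (R X : Type*) [CommRing R]

noncomputable def toMonoidAlgebra : FreeLieAlgebra R X →ₗ⁅R⁆ MonoidAlgebra R (FreeMonoid X) :=
  lift R fun x => single (FreeMonoid.of x) 1

variable {R X}

theorem toMonoidAlgebra_rnBracket_cons (x : X) {l : List X} (hl : l ≠ []) :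
    toMonoidAlgebra R X (rnBracket R (x :: l)) =
      single (FreeMonoid.of x) 1 * toMonoidAlgebra R X (rnBracket R l) -
        toMonoidAlgebra R X (rnBracket R l) * single (FreeMonoid.of x) 1 := by
  obtain ⟨y, l, rfl⟩ := exists_cons_of_ne_nil hl
  show toMonoidAlgebra R X ⁅of R x, rnBracket R (y :: l)⁆ = _
  rw [LieHom.map_lie, toMonoidAlgebra, lift_of_apply, Ring.lie_def]

theorem toMonoidAlgebra_rnBracket_singleton (x : X) :
    toMonoidAlgebra R X (rnBracket R [x]) = single (FreeMonoid.of x) 1 :=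
  lift_of_apply _ _

variable [LinearOrder X]

theorem isLeadingWord_rnBracket_cons {x : X} {l L : List X} (hl : l ≠ [])
    (h : IsLeadingWord (toMonoidAlgebra R X (rnBracket R l)) L) (hx : x :: L ≠ L ++ [x]) :
    IsLeadingWord (toMonoidAlgebra R X (rnBracket R (x :: l))) (min (x :: L) (L ++ [x])) := by
  rw [toMonoidAlgebra_rnBracket_cons x hl]
  exact h.commutator x hx

theorem isLeadingWord_rnBracket_replicate_append {c a : X} (hca : c < a) (k : ℕ) :
    IsLeadingWord (toMonoidAlgebra R X (rnBracket R (replicate k c ++ [a])))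
      (replicate k c ++ [a]) := by
  induction k with
  | zero => simpa [toMonoidAlgebra_rnBracket_singleton] using isLeadingWord_single_of a
  | succ k ih =>
    have hlt : c :: (replicate k c ++ [a]) < replicate k c ++ [a] ++ [c] := by
      rw [← cons_append, ← replicate_succ, replicate_succ', append_assoc, append_assoc]
      exact append_left_lt (List.Lex.rel hca)
    have := isLeadingWord_rnBracket_cons (by simp) ih hlt.ne
    rwa [min_eq_left hlt.le] at this

theorem isLeadingWord_rnBracket_append_replicate_append {c a : X} (hca : c < a) (k : ℕ)
    {v : List X} (hv : ∀ y ∈ v, c < y) :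
    IsLeadingWord (toMonoidAlgebra R X (rnBracket R (v ++ replicate (k + 1) c ++ [a])))
      (replicate (k + 1) c ++ a :: v.reverse) := by
  induction v with
  | nil => simpa using isLeadingWord_rnBracket_replicate_append (R := R) hca (k + 1)
  | cons y v ih =>
    have hlt : replicate (k + 1) c ++ a :: v.reverse ++ [y] <
        y :: (replicate (k + 1) c ++ a :: v.reverse) :=
      List.Lex.rel (hv y (by simp))
    have := isLeadingWord_rnBracket_cons (by simp) (ih fun z hz => hv z (by simp [hz])) hlt.ne'
    rw [min_eq_right hlt.le] at this
    simpa using this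

theorem linearIndependent_rnBracket {ι : Type*} {w : ι → List X} (hw : Function.Injective w)
    (hshape : ∀ i, ∃ v k c a, w i = v ++ replicate (k + 1) c ++ [a] ∧ c < a ∧ ∀ y ∈ v, c < y) :
    LinearIndependent R fun i => rnBracket R (w i) := by
  choose v k c a hwi hca hv using hshape
  have hlead i := isLeadingWord_rnBracket_append_replicate_append (R := R) (hca i) (k i) (hv i)
  simp only [← hwi] at hlead
  refine .of_comp (toMonoidAlgebra R X).toLinearMap <| .of_isUnit_coeff_of_le
      (fun L => Finsupp.lapply (ofList L) ∘ₗ (coeffLinearEquiv R).toLinearMap)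
      (fun i => replicate (k i + 1) (c i) ++ a i :: (v i).reverse) (fun i j hij => hw ?_)
      (fun i => (hlead i).1) (fun i L hL => ((hlead i).2 L hL).2)
  obtain ⟨hc, hk, ha, hvij⟩ := replicate_succ_append_cons_inj (hca i).ne' (hca j).ne' hij
  rw [hwi, hwi, hc, hk, ha, reverse_injective hvij]

end FreeLieAlgebra

namespace ReutenauerIndex

open List

variable {n : ℕ}

theorem ofFn_injective : Function.Injective fun p : ReutenauerIndex n => ofFn p.2.val := by
  rintro ⟨d, i, hi⟩ ⟨d', i', hi'⟩ h
  obtain ⟨hd, hii'⟩ := Sigma.mk.inj_iff.mp (ofFn_inj'.mp h)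
  obtain rfl : d = d' := Nat.add_right_cancel hd
  obtain rfl := eq_of_heq hii'
  rfl

theorem exists_ofFn_eq_append_replicate (p : ReutenauerIndex n) : ∃ v k c a,
    ofFn p.2.val = v ++ replicate (k + 1) c ++ [a] ∧ c < a ∧ ∀ y ∈ v, c < y := by
  obtain ⟨d, i, hchain, hlast⟩ := p
  have hsplit :
      ofFn i = ofFn (fun j : Fin (d + 1) => i j.castSucc) ++ [i (Fin.last (d + 1))] := by
    rw [ofFn_succ', concat_eq_append]
  have hu : (ofFn fun j : Fin (d + 1) => i j.castSucc).IsChain (· ≥ ·) :=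
    isChain_ofFn.mpr fun j hj => hchain ⟨j, by omega⟩ (by simpa using Nat.lt_of_succ_lt_succ hj)
  rw [ofFn_succ', concat_eq_append] at hu
  obtain ⟨v, k, huv, hv⟩ := exists_eq_append_replicate_of_isChain hu
  refine ⟨v, k, _, _, ?_, hlast, hv⟩
  rw [hsplit, ofFn_succ', concat_eq_append, huv]

end ReutenauerIndex

theorem stmt19_general {k : Type*} [Field k] (n : ℕ) :
    LinearIndependent k
      (fun p : ReutenauerIndex n =>
        rnBracket k (List.ofFn p.2.val) : ReutenauerIndex n → FreeLieAlgebra k (Fin n)) :=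
  FreeLieAlgebra.linearIndependent_rnBracket ReutenauerIndex.ofFn_injective
    ReutenauerIndex.exists_ofFn_eq_append_replicate

theorem stmt19 {k : Type*} [Field k] [CharZero k] (n : ℕ) :
    LinearIndependent k
      (fun p : ReutenauerIndex n =>
        rnBracket k (List.ofFn p.2.val) : ReutenauerIndex n → FreeLieAlgebra k (Fin n)) :=
  stmt19_general n
end
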